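/- Let $n \ge (r+1)^2$ and $q \ge r$, and let $H = H(n, r, q \mid \sigma)$ where $\sigma = (1,1,\dots,1)$ ($r$ parts equal to 1, so edges are the $r$-sets with at most one vertex per class). Then $\nu(H) = \lfloor nq/r \rfloor$; i.e., there is a matching leaving exactly $nq \bmod r$ vertices unmatched. -/
import Mathlib


/-- `K` is an edge of the σ-hypergraph `H(n,r,q | σ)` (with σ given by `a : Fin s → ℕ`). -/
def isEdge {n q s : ℕ} (a : Fin s → ℕ) (K : Finset (Fin n × Fin q)) : Prop :=
  Multiset.filter (fun x => x ≠ 0)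
      (Multiset.map (fun i => (K.filter (fun v => v.1 = i)).card)
        (Finset.univ : Finset (Fin n)).val)
    = Multiset.map a (Finset.univ : Finset (Fin s)).val

/-- `M` is a matching: a collection of pairwise disjoint edges. -/
def isMatching {n q s : ℕ} (a : Fin s → ℕ) (M : Finset (Finset (Fin n × Fin q))) : Prop :=
  (∀ E ∈ M, isEdge a E) ∧ ∀ E ∈ M, ∀ F ∈ M, E ≠ F → Disjoint E F

lemma edge_card {n q r : ℕ} {E : Finset (Fin n × Fin q)}
    (h : isEdge (fun _ : Fin r => 1) E) : E.card = r := by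
  unfold isEdge at h
  set c : Fin n → ℕ := fun i => (E.filter (fun v => v.1 = i)).card with hc
  have h1 := congrArg Multiset.sum h
  rw [Multiset.map_const', Multiset.sum_replicate] at h1
  have h2 := Multiset.filter_add_not (fun x => x ≠ 0) (Multiset.map c Finset.univ.val)
  have h3 := congrArg Multiset.sum h2
  rw [Multiset.sum_add] at h3
  have h4 : (Multiset.filter (fun x => ¬ x ≠ 0) (Multiset.map c Finset.univ.val)).sum = 0 := by
    apply Multiset.sum_eq_zero
    intro x hx
    have := Multiset.of_mem_filter hx
    simpa using this
  have h5 : (Multiset.map c Finset.univ.val).sum = ∑ i : Fin n, c i := rfl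
  have h6 : ∑ i : Fin n, c i = E.card :=
    (Finset.card_eq_sum_card_fiberwise (f := Prod.fst) (t := Finset.univ)
      (fun x _ => Finset.mem_univ _)).symm
  simp only [Finset.card_val, Finset.card_univ, Fintype.card_fin, smul_eq_mul, mul_one] at h1
  omega

theorem stmt_8 (n r q : ℕ)
    (hr : 1 ≤ r)
    (hn : (r + 1) ^ 2 ≤ n) (hq : r ≤ q) :
    IsGreatest
      {m | ∃ M : Finset (Finset (Fin n × Fin q)),
        isMatching (fun _ : Fin r => 1) M ∧ M.card = m}
      (n * q / r) := by
  have hn0 : 0 < n := by nlinarith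
  have hq0 : 0 < q := by omega
  have hrn : r < n := by nlinarith
  constructor
  · -- construction
    set m := n * q / r with hm
    have hmr : m * r ≤ n * q := Nat.div_mul_le_self _ _
    set fk : ℕ → Fin n × Fin q :=
      fun k => (⟨k % n, Nat.mod_lt _ hn0⟩, ⟨k / n % q, Nat.mod_lt _ hq0⟩) with hfk
    have finj : ∀ k l, k < n * q → l < n * q → fk k = fk l → k = l := by
      intro k l hk hl hkl
      simp only [hfk, Prod.mk.injEq, Fin.mk.injEq] at hkl
      have hkq : k / n < q := (Nat.div_lt_iff_lt_mul hn0).mpr (by rw [mul_comm]; exact hk)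
      have hlq : l / n < q := (Nat.div_lt_iff_lt_mul hn0).mpr (by rw [mul_comm]; exact hl)
      rw [Nat.mod_eq_of_lt hkq, Nat.mod_eq_of_lt hlq] at hkl
      obtain ⟨h1, h2⟩ := hkl
      have e1 := Nat.div_add_mod k n
      have e2 := Nat.div_add_mod l n
      rw [h1, h2] at e1
      omega
    set Ed : ℕ → Finset (Fin n × Fin q) :=
      fun t => (Finset.range r).image (fun s => fk (t * r + s)) with hEd
    have hidx : ∀ t s, t < m → s < r → t * r + s < n * q := by
      intro t s ht hs
      have h1 : (t + 1) * r ≤ m * r := Nat.mul_le_mul_right r ht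
      rw [add_mul, one_mul] at h1
      omega
    have hmodinj : ∀ t s s', s < r → s' < r →
        (t * r + s) % n = (t * r + s') % n → s = s' := by
      intro t s s' hs hs' h
      have h2 : s % n = s' % n := Nat.ModEq.add_left_cancel' (t * r) h
      rw [Nat.mod_eq_of_lt (by omega), Nat.mod_eq_of_lt (by omega)] at h2
      exact h2
    have hfst : ∀ k, (fk k).1.val = k % n := fun k => rfl
    have hinjOn : ∀ t, Set.InjOn (fun s => fk (t * r + s)) (Finset.range r) := by
      intro t s hs s' hs' h
      simp only [Finset.coe_range, Set.mem_Iio] at hs hs'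
      exact hmodinj t s s' hs hs' (congrArg (fun v => v.1.val) h)
    have hEcard : ∀ t, (Ed t).card = r := by
      intro t
      rw [hEd]
      rw [Finset.card_image_of_injOn (hinjOn t), Finset.card_range]
    have hE1 : ∀ t (i : Fin n), ((Ed t).filter (fun v => v.1 = i)).card ≤ 1 := by
      intro t i
      apply Finset.card_le_one.mpr
      intro a ha b hb
      rw [Finset.mem_filter] at ha hb
      obtain ⟨ha1, ha2⟩ := ha
      obtain ⟨hb1, hb2⟩ := hb
      simp only [hEd, Finset.mem_image, Finset.mem_range] at ha1 hb1
      obtain ⟨s, hs, rfl⟩ := ha1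
      obtain ⟨s', hs', rfl⟩ := hb1
      have : (t * r + s) % n = (t * r + s') % n := by
        rw [← hfst, ← hfst, ha2, hb2]
      rw [hmodinj t s s' hs hs' this]
    have hisEdge : ∀ t, isEdge (fun _ : Fin r => 1) (Ed t) := by
      intro t
      unfold isEdge
      set c : Fin n → ℕ := fun i => ((Ed t).filter (fun v => v.1 = i)).card with hc
      set L := Multiset.filter (fun x => x ≠ 0) (Multiset.map c Finset.univ.val) with hL
      have hall1 : ∀ b ∈ L, b = 1 := by
        intro b hb
        rw [hL, Multiset.mem_filter] at hb
        obtain ⟨hb1, hb2⟩ := hb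
        rw [Multiset.mem_map] at hb1
        obtain ⟨i, _, rfl⟩ := hb1
        have := hE1 t i
        have hci : c i = ((Ed t).filter (fun v => v.1 = i)).card := rfl
        omega
      have hrepl : L = Multiset.replicate (Multiset.card L) 1 :=
        (Multiset.eq_replicate_card).mpr hall1
      have hsum : L.sum = r := by
        have h2 := Multiset.filter_add_not (fun x => x ≠ 0) (Multiset.map c Finset.univ.val)
        have h3 := congrArg Multiset.sum h2
        rw [Multiset.sum_add] at h3
        have h4 : (Multiset.filter (fun x => ¬ x ≠ 0) (Multiset.map c Finset.univ.val)).sum = 0 := by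
          apply Multiset.sum_eq_zero
          intro x hx
          have := Multiset.of_mem_filter hx
          simpa using this
        have h5 : (Multiset.map c Finset.univ.val).sum = ∑ i : Fin n, c i := rfl
        have h6 : ∑ i : Fin n, c i = (Ed t).card :=
          (Finset.card_eq_sum_card_fiberwise (f := Prod.fst) (t := Finset.univ)
            (fun x _ => Finset.mem_univ _)).symm
        rw [← hL] at h3
        rw [hEcard t] at h6
        omega
      have hcardL : Multiset.card L = r := by
        rw [hrepl, Multiset.sum_replicate, smul_eq_mul, mul_one] at hsum
        exact hsum
      rw [Multiset.map_const']
      rw [hrepl, hcardL]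
      congr 1
      simp
    have hdisj : ∀ t t', t < m → t' < m → t ≠ t' → Disjoint (Ed t) (Ed t') := by
      intro t t' ht ht' hne
      rw [Finset.disjoint_left]
      intro v hv hv'
      simp only [hEd, Finset.mem_image, Finset.mem_range] at hv hv'
      obtain ⟨s, hs, rfl⟩ := hv
      obtain ⟨s', hs', he⟩ := hv'
      have heq : t' * r + s' = t * r + s :=
        finj _ _ (hidx t' s' ht' hs') (hidx t s ht hs) he
      have ht1 : t = (t * r + s) / r := by
        rw [mul_comm, Nat.mul_add_div (by omega), Nat.div_eq_of_lt hs, add_zero]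
      have ht2 : t' = (t' * r + s') / r := by
        rw [mul_comm, Nat.mul_add_div (by omega), Nat.div_eq_of_lt hs', add_zero]
      rw [heq] at ht2
      omega
    refine ⟨(Finset.range m).image Ed, ⟨⟨?_, ?_⟩, ?_⟩⟩
    · intro E hE
      rw [Finset.mem_image] at hE
      obtain ⟨t, _, rfl⟩ := hE
      exact hisEdge t
    · intro E hE F hF hne
      rw [Finset.mem_image] at hE hF
      obtain ⟨t, ht, rfl⟩ := hE
      obtain ⟨t', ht', rfl⟩ := hF
      rw [Finset.mem_range] at ht ht'
      exact hdisj t t' ht ht' (by rintro rfl; exact hne rfl)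
    · rw [Finset.card_image_of_injOn, Finset.card_range]
      intro t ht t' ht' he
      simp only [Finset.coe_range, Set.mem_Iio] at ht ht'
      by_contra hne
      have hd := hdisj t t' ht ht' hne
      rw [he] at hd
      rw [disjoint_self] at hd
      have hc' := hEcard t'
      rw [hd] at hc'
      simp at hc'
      omega
  · -- upper bound
    rintro m ⟨M, ⟨hE, hD⟩, rfl⟩
    have hcard : (M.biUnion (fun E => E)).card = M.card * r := by
      rw [Finset.card_biUnion (fun E hE' F hF' hne => hD E hE' F hF' hne)]
      rw [Finset.sum_congr rfl (fun E hE' => edge_card (hE E hE'))]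
      simp [mul_comm]
    have hle : (M.biUnion (fun E => E)).card ≤ n * q := by
      calc (M.biUnion (fun E => E)).card ≤ (Finset.univ : Finset (Fin n × Fin q)).card :=
            Finset.card_le_card (Finset.subset_univ _)
        _ = n * q := by simp
    rw [Nat.le_div_iff_mul_le (by omega : 0 < r)]
    omega
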